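/- Let X and Y be topological spaces, (Z, λ) an equiconnected space, (I, ≤) a well-ordered set, (f_i)_{i∈I} a family of Baire-one maps f_i : Y → Z, and (φ_i)_{i∈I} a locally finite partition of unity on X. Then the mapping f : X × Y → Z given by f(x,y) = Σ^λ_{i∈I} φ_i(x) f_i(y) is Baire-one. -/

import Mathlib

/-!
Near a point `x₀` only the finitely many `φ i` whose supports meet a neighbourhood `U` of `x₀`
can be nonzero; enumerate their indices increasingly by `e₀`. Deleting points of weight `0` does
not change a λ-sum, so on `U × Y` the λ-sum `Σ^λ φᵢ(x) wᵢ(y)` equals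
`λ_{N+1}(w ∘ e₀ (y), φ ∘ e₀ (x))`, which is continuous when every `wᵢ` is, as soon as `λ_{n+1}`
is continuous on `Z^{n+1} × S_{n+1}`. Taking for `wᵢ` the continuous approximants `hᵢₙ → gᵢ`
gives continuous maps that converge pointwise to `f`, by continuity of `λ_{n+1}` in the points.

`λ_{n+2}` is `λ_{n+1}` after merging the first two points into `λ(x₁, x₂, α₂/(α₁+α₂))`, so its
continuity follows from that of `λ_{n+1}` except where `α₁ = α₂ = 0` and the ratio jumps. There
the merged point has weight `0`, so the value does not depend on the ratio, and compactness of
`[0,1]` (the tube lemma) gives continuity.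
-/

open Set Function Filter Topology

universe u

/-- An *equiconnecting* map on `Z`: a map `λ : Z × Z × [0,1] → Z`, continuous on
`Z × Z × [0,1]`, with `λ(x,y,0) = x`, `λ(x,y,1) = y` and `λ(x,x,t) = x`. -/
structure IsEquiconnecting {Z : Type*} [TopologicalSpace Z] (lam : Z → Z → ℝ → Z) : Prop where
  continuousOn : ContinuousOn (fun p : Z × Z × ℝ => lam p.1 p.2.1 p.2.2)
    (Set.univ ×ˢ Set.univ ×ˢ Set.Icc (0 : ℝ) 1)
  map_zero : ∀ x y : Z, lam x y 0 = x
  map_one : ∀ x y : Z, lam x y 1 = y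
  map_diag : ∀ x : Z, ∀ t ∈ Set.Icc (0 : ℝ) 1, lam x x t = x

/-- `lambdaIter lam n` is the map `λ_{n+1} : Z^{n+1} × S_{n+1} → Z` from the paper,
defined recursively. -/
noncomputable def lambdaIter {Z : Type*} (lam : Z → Z → ℝ → Z) :
    (n : ℕ) → (Fin (n + 1) → Z) → (Fin (n + 1) → ℝ) → Z
  | 0, x, _ => x 0
  | n + 1, x, a =>
      if 0 < a 0 + a 1 then
        lambdaIter lam n
          (Fin.cons (lam (x 0) (x 1) (a 1 / (a 0 + a 1))) fun i => x i.succ.succ)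
          (Fin.cons (a 0 + a 1) fun i => a i.succ.succ)
      else
        lambdaIter lam n (fun i => x i.succ) fun i => a i.succ

/-- `lambdaIterSet lam A n` is the set `λ^n(A)`:  `λ^0(A) = A` and
`λ^{n+1}(A) = λ(λ^n(A) × A × [0,1])`. -/
def lambdaIterSet {Z : Type*} (lam : Z → Z → ℝ → Z) (A : Set Z) : ℕ → Set Z
  | 0 => A
  | n + 1 => (fun p : Z × Z × ℝ => lam p.1 p.2.1 p.2.2) ''
      (lambdaIterSet lam A n ×ˢ A ×ˢ Set.Icc (0 : ℝ) 1)

/-- `λ^∞(A) = ⋃_{n ≥ 1} λ^n(A)`. -/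
def lambdaInftySet {Z : Type*} (lam : Z → Z → ℝ → Z) (A : Set Z) : Set Z :=
  ⋃ n : ℕ, lambdaIterSet lam A (n + 1)

/-- An equiconnected space `(Z, λ)` is locally convex if every point has arbitrarily small
neighborhoods `V` with `λ^∞(V)` inside a given neighborhood. -/
def IsLocallyConvexEquiconnected {Z : Type*} [TopologicalSpace Z] (lam : Z → Z → ℝ → Z) :
    Prop :=
  ∀ z : Z, ∀ U ∈ nhds z, ∃ V ∈ nhds z, lambdaInftySet lam V ⊆ U

/-- A map is Baire-one if it is the pointwise limit of a sequence of continuous maps. -/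
def BaireOne {Y Z : Type*} [TopologicalSpace Y] [TopologicalSpace Z] (g : Y → Z) : Prop :=
  ∃ h : ℕ → Y → Z, (∀ n, Continuous (h n)) ∧
    ∀ y, Filter.Tendsto (fun n => h n y) Filter.atTop (nhds (g y))

/-- A locally finite partition of unity on `X`: continuous `[0,1]`-valued functions whose
supports (closures of the sets where they are nonzero) form a locally finite family and whose
pointwise sum is `1`. -/
def IsLocFinPartitionOfUnity {I X : Type*} [TopologicalSpace X] (φ : I → X → ℝ) : Prop :=
  (∀ i, Continuous (φ i)) ∧ (∀ i x, φ i x ∈ Set.Icc (0 : ℝ) 1) ∧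
    (LocallyFinite fun i => closure (Function.support (φ i))) ∧ ∀ x, ∑ᶠ i, φ i x = 1

/-- A strong PP-space: for every dense `D ⊆ X` there are a sequence of locally finite
partitions of unity and families of points of `D` such that points attached to the supports
containing `x` converge to `x` uniformly in the index, in the sense of condition (3). -/
def IsStrongPPSpace (X : Type*) [TopologicalSpace X] : Prop :=
  ∀ D : Set X, Dense D →
    ∃ (I : ℕ → Type u) (φ : ∀ n, I n → X → ℝ) (p : ∀ n, I n → X),
      (∀ n, IsLocFinPartitionOfUnity (φ n)) ∧ (∀ n i, p n i ∈ D) ∧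
      ∀ x : X, ∀ U ∈ nhds x, ∃ n₀ : ℕ, ∀ n ≥ n₀, ∀ i : I n,
        x ∈ closure (Function.support (φ n i)) → p n i ∈ U

/-- A zero set: the preimage of `{0}` under a continuous function `X → [0,1]`. -/
def IsZeroSet {X : Type*} [TopologicalSpace X] (A : Set X) : Prop :=
  ∃ f : X → ℝ, Continuous f ∧ (∀ x, f x ∈ Set.Icc (0 : ℝ) 1) ∧ A = f ⁻¹' {0}

/-- A cozero set: the preimage of `(0,1]` under a continuous function `X → [0,1]`. -/
def IsCozeroSet {X : Type*} [TopologicalSpace X] (A : Set X) : Prop :=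
  ∃ f : X → ℝ, Continuous f ∧ (∀ x, f x ∈ Set.Icc (0 : ℝ) 1) ∧ A = f ⁻¹' Set.Ioc (0 : ℝ) 1

/-- A functionally ambiguous set: simultaneously a countable union of zero sets and a
countable intersection of cozero sets. -/
def IsFunctionallyAmbiguous {X : Type*} [TopologicalSpace X] (A : Set X) : Prop :=
  (∃ F : ℕ → Set X, (∀ n, IsZeroSet (F n)) ∧ A = ⋃ n, F n) ∧
    ∃ B : ℕ → Set X, (∀ n, IsCozeroSet (B n)) ∧ A = ⋂ n, B n

/-- A discrete family of sets: every point has a neighborhood meeting at most one member. -/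
def IsDiscreteFamily {I X : Type*} [TopologicalSpace X] (A : I → Set X) : Prop :=
  ∀ x : X, ∃ U ∈ nhds x, {i : I | (U ∩ A i).Nonempty}.Subsingleton

/-- Weakly collectionwise normal: every discrete family of zero sets can be separated by a
discrete family of cozero sets. -/
def WeaklyCollectionwiseNormal (X : Type*) [TopologicalSpace X] : Prop :=
  ∀ (S : Type u) (F : S → Set X), (∀ s, IsZeroSet (F s)) → IsDiscreteFamily F →
    ∃ U : S → Set X, (∀ s, IsCozeroSet (U s)) ∧ IsDiscreteFamily U ∧ ∀ s, F s ⊆ U s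

/-- A contracting structure on `Z`: a continuous `γ : Z × [0,1] → Z` with `γ(z,0) = z` and
`γ(z,1) = z₀`. -/
structure IsContracting {Z : Type*} [TopologicalSpace Z] (γ : Z → ℝ → Z) (z₀ : Z) :
    Prop where
  continuousOn : ContinuousOn (fun p : Z × ℝ => γ p.1 p.2) (Set.univ ×ˢ Set.Icc (0 : ℝ) 1)
  map_zero : ∀ z : Z, γ z 0 = z
  map_one : ∀ z : Z, γ z 1 = z₀



theorem ContinuousOn.continuousWithinAt_comp_of_const_slice {A B C : Type*} [TopologicalSpace A]
    [TopologicalSpace B] [TopologicalSpace C] {S : Set A} {K : Set B} {T : A × B → C}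
    (hT : ContinuousOn T (S ×ˢ K)) (hK : IsCompact K) {τ : A → B} (hτ : MapsTo τ S K) {p : A}
    (hp : p ∈ S) {c : C} (hc : ∀ t ∈ K, T (p, t) = c) :
    ContinuousWithinAt (fun q => T (q, τ q)) S p := by
  show Tendsto _ _ (𝓝 (T (p, τ p)))
  rw [hc _ (hτ hp)]
  refine fun U hU => mem_map.2 ?_
  have hnear : ∀ t ∈ K, ∀ᶠ z : A × B in 𝓝 (p, t), z.1 ∈ S → z.2 ∈ K → T (z.1, z.2) ∈ U :=
    fun t ht => by
      have := hT (p, t) ⟨hp, ht⟩ (by rwa [hc t ht])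
      filter_upwards [mem_nhdsWithin_iff_eventually.1 this] with z hz h1 h2 using hz ⟨h1, h2⟩
  filter_upwards [nhdsWithin_le_nhds (hK.eventually_forall_of_forall_eventually
      (P := fun a b => a ∈ S → b ∈ K → T (a, b) ∈ U) hnear),
    self_mem_nhdsWithin] with q hq hqS using hq _ (hτ hqS) hqS (hτ hqS)

section Merge

variable {Z : Type*} {lam : Z → Z → ℝ → Z} {n : ℕ}

/-- The parameter `t / (s + t)` at which `lambdaIter` merges its first two points; the value `1`
where `s + t = 0` (instead of the junk `0 / 0 = 0`) makes `lambdaIter_succ` hold in all cases. -/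
noncomputable def mixRatio (s t : ℝ) : ℝ := if 0 < s + t then t / (s + t) else 1

lemma mixRatio_mem_Icc {s t : ℝ} (hs : 0 ≤ s) (ht : 0 ≤ t) : mixRatio s t ∈ Icc (0 : ℝ) 1 := by
  unfold mixRatio
  split_ifs with h
  · exact ⟨div_nonneg ht h.le, (div_le_one h).2 (le_add_of_nonneg_left hs)⟩
  · exact ⟨zero_le_one, le_rfl⟩

variable (lam) in
def mergeHead (x : Fin (n + 2) → Z) (t : ℝ) : Fin (n + 1) → Z :=
  Fin.cons (lam (x 0) (x 1) t) fun i => x i.succ.succ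

def mergeHeadWeight (a : Fin (n + 2) → ℝ) : Fin (n + 1) → ℝ :=
  Fin.cons (a 0 + a 1) fun i => a i.succ.succ

lemma lambdaIter_succ_of_pos (x : Fin (n + 2) → Z) {a : Fin (n + 2) → ℝ} (h : 0 < a 0 + a 1) :
    lambdaIter lam (n + 1) x a
      = lambdaIter lam n (mergeHead lam x (a 1 / (a 0 + a 1))) (mergeHeadWeight a) := by
  rw [lambdaIter, if_pos h, mergeHead, mergeHeadWeight]

lemma lambdaIter_succ_of_apply_zero (hone : ∀ x y : Z, lam x y 1 = y) (x : Fin (n + 2) → Z)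
    {a : Fin (n + 2) → ℝ} (h0 : a 0 = 0) :
    lambdaIter lam (n + 1) x a = lambdaIter lam n (Fin.tail x) (Fin.tail a) := by
  rw [lambdaIter]
  split_ifs with hpos
  · rw [h0, zero_add] at hpos ⊢
    rw [div_self hpos.ne', hone]
    congr 1 <;> ext i <;> refine Fin.cases ?_ (fun _ => ?_) i <;> rfl
  · rfl

lemma lambdaIter_succ (hone : ∀ x y : Z, lam x y 1 = y) (x : Fin (n + 2) → Z)
    {a : Fin (n + 2) → ℝ} (ha0 : 0 ≤ a 0) (ha1 : 0 ≤ a 1) :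
    lambdaIter lam (n + 1) x a
      = lambdaIter lam n (mergeHead lam x (mixRatio (a 0) (a 1))) (mergeHeadWeight a) := by
  by_cases h : 0 < a 0 + a 1
  · rw [lambdaIter_succ_of_pos x h, mixRatio, if_pos h]
  · have h0 : a 0 = 0 := by linarith
    rw [lambdaIter, if_neg h, mixRatio, if_neg h]
    congr 1 <;> ext i <;> refine Fin.cases ?_ (fun _ => ?_) i <;>
      simp [mergeHead, mergeHeadWeight, hone, h0]

lemma mergeHeadWeight_mem_stdSimplex {a : Fin (n + 2) → ℝ}
    (ha : a ∈ stdSimplex ℝ (Fin (n + 2))) : mergeHeadWeight a ∈ stdSimplex ℝ (Fin (n + 1)) := by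
  refine ⟨fun i => Fin.cases (add_nonneg (ha.1 0) (ha.1 1)) (fun j => ha.1 _) i, ?_⟩
  rw [← ha.2, mergeHeadWeight, Fin.sum_cons, Fin.sum_univ_succ, Fin.sum_univ_succ, add_assoc]
  rfl

lemma mergeHead_comp_succAbove (x : Fin (n + 3) → Z) (t : ℝ) (q : Fin (n + 1)) :
    mergeHead lam x t ∘ q.succ.succAbove = mergeHead lam (x ∘ q.succ.succ.succAbove) t := by
  ext i
  refine Fin.cases ?_ (fun j => ?_) i
  · simp [mergeHead]
  · simp [mergeHead, Fin.succ_succAbove_succ]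

lemma mergeHeadWeight_comp_succAbove (a : Fin (n + 3) → ℝ) (q : Fin (n + 1)) :
    mergeHeadWeight a ∘ q.succ.succAbove = mergeHeadWeight (a ∘ q.succ.succ.succAbove) := by
  ext i
  refine Fin.cases ?_ (fun j => ?_) i
  · simp [mergeHeadWeight]
  · simp [mergeHeadWeight, Fin.succ_succAbove_succ]

end Merge

section DeleteZeroWeights

variable {Z : Type*} {lam : Z → Z → ℝ → Z} {n : ℕ}

lemma lambdaIter_eq_comp_succAbove_zero (hone : ∀ x y : Z, lam x y 1 = y)
    (x : Fin (n + 2) → Z) {a : Fin (n + 2) → ℝ} (h0 : a 0 = 0) :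
    lambdaIter lam (n + 1) x a
      = lambdaIter lam n (x ∘ (0 : Fin (n + 2)).succAbove) (a ∘ (0 : Fin (n + 2)).succAbove) := by
  rw [lambdaIter_succ_of_apply_zero hone x h0, Fin.succAbove_zero]
  rfl

lemma lambdaIter_eq_comp_succAbove_one (hzero : ∀ x y : Z, lam x y 0 = x)
    (hone : ∀ x y : Z, lam x y 1 = y) {a : Fin (n + 2) → ℝ}
    (ha : a ∈ stdSimplex ℝ (Fin (n + 2))) (x : Fin (n + 2) → Z) (h1 : a 1 = 0) :
    lambdaIter lam (n + 1) x a
      = lambdaIter lam n (x ∘ (1 : Fin (n + 2)).succAbove) (a ∘ (1 : Fin (n + 2)).succAbove) := by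
  rw [lambdaIter_succ hone x (ha.1 0) (ha.1 1)]
  rcases (ha.1 0).lt_or_eq with h0 | h0
  · have hmix : mixRatio (a 0) (a 1) = 0 := by rw [mixRatio, h1, add_zero, if_pos h0, zero_div]
    rw [hmix]
    congr 1 <;> ext i <;> refine Fin.cases ?_ (fun j => ?_) i <;>
      simp [mergeHead, mergeHeadWeight, hzero, h1, Fin.succAbove]
  · obtain ⟨m, rfl⟩ : ∃ m, n = m + 1 := by
      cases n with
      | zero => have := ha.2; simp [Fin.sum_univ_two, ← h0, h1] at this
      | succ m => exact ⟨m, rfl⟩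
    rw [lambdaIter_succ_of_apply_zero hone _ (by simp [mergeHeadWeight, ← h0, h1]),
      lambdaIter_succ_of_apply_zero hone _ (by simp [Fin.succAbove, ← h0])]
    rfl

theorem lambdaIter_eq_comp_succAbove (hzero : ∀ x y : Z, lam x y 0 = x)
    (hone : ∀ x y : Z, lam x y 1 = y) {a : Fin (n + 2) → ℝ}
    (ha : a ∈ stdSimplex ℝ (Fin (n + 2))) (x : Fin (n + 2) → Z) {p : Fin (n + 2)}
    (hp : a p = 0) :
    lambdaIter lam (n + 1) x a = lambdaIter lam n (x ∘ p.succAbove) (a ∘ p.succAbove) := by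
  induction n with
  | zero =>
    obtain rfl | rfl : p = 0 ∨ p = 1 := by fin_cases p <;> simp
    · exact lambdaIter_eq_comp_succAbove_zero hone x hp
    · exact lambdaIter_eq_comp_succAbove_one hzero hone ha x hp
  | succ m ih =>
    induction p using Fin.cases with
    | zero => exact lambdaIter_eq_comp_succAbove_zero hone x hp
    | succ p =>
    induction p using Fin.cases with
    | zero => exact lambdaIter_eq_comp_succAbove_one hzero hone ha x hp
    | succ q =>
    have hq : mergeHeadWeight a q.succ = 0 := hp
    rw [lambdaIter_succ hone x (ha.1 0) (ha.1 1), ih (mergeHeadWeight_mem_stdSimplex ha) _ hq,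
      lambdaIter_succ hone (a := a ∘ _) _ (ha.1 _) (ha.1 _), mergeHead_comp_succAbove,
      mergeHeadWeight_comp_succAbove]
    rfl

lemma lambdaIter_comp_of_surjective {N k : ℕ} (x : Fin (N + 1) → Z) (a : Fin (N + 1) → ℝ)
    {u : Fin (k + 1) → Fin (N + 1)} (hu : StrictMono u) (hsurj : Surjective u) :
    lambdaIter lam N x a = lambdaIter lam k (x ∘ u) (a ∘ u) := by
  obtain rfl : k = N := by simpa using Fintype.card_of_bijective ⟨hu.injective, hsurj⟩
  obtain rfl : u = id := (hu.range_inj strictMono_id).1 (by rw [range_id, hsurj.range_eq])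
  rfl

theorem lambdaIter_comp_of_range_eq_support (hzero : ∀ x y : Z, lam x y 0 = x)
    (hone : ∀ x y : Z, lam x y 1 = y) {N k : ℕ} {a : Fin (N + 1) → ℝ}
    (ha : a ∈ stdSimplex ℝ (Fin (N + 1))) (x : Fin (N + 1) → Z) {u : Fin (k + 1) → Fin (N + 1)}
    (hu : StrictMono u) (hrange : range u = support a) :
    lambdaIter lam N x a = lambdaIter lam k (x ∘ u) (a ∘ u) := by
  induction N with
  | zero =>
    exact lambdaIter_comp_of_surjective x a hu fun b =>
      ⟨0, (Fin.fin_one_eq_zero _).trans (Fin.fin_one_eq_zero b).symm⟩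
  | succ N ih =>
    by_cases hsurj : Surjective u
    · exact lambdaIter_comp_of_surjective x a hu hsurj
    obtain ⟨p, hp⟩ := not_forall.1 hsurj
    have hap : a p = 0 := notMem_support.1 (hrange ▸ hp)
    choose u' hu' using fun m => Fin.exists_succAbove_eq fun h : u m = p => hp ⟨m, h⟩
    have hu_eq : u = p.succAbove ∘ u' := funext fun m => (hu' m).symm
    have hu'mono : StrictMono u' := fun m m' h =>
      (Fin.strictMono_succAbove p).lt_iff_lt.1 (by rw [hu' m, hu' m']; exact hu h)
    have ha' : a ∘ p.succAbove ∈ stdSimplex ℝ (Fin (N + 1)) := by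
      refine ⟨fun i => ha.1 _, ?_⟩
      rw [← ha.2, Fin.sum_univ_succAbove a p, hap, zero_add]
      rfl
    have hrange' : range u' = support (a ∘ p.succAbove) := by
      rw [support_comp_eq_preimage, ← hrange, hu_eq, range_comp,
        Fin.succAbove_right_injective.preimage_image]
    rw [lambdaIter_eq_comp_succAbove hzero hone ha x hap, ih ha' _ hu'mono hrange', hu_eq]
    rfl

theorem lambdaIter_comp_eq_of_support_subset {I : Type*} [LinearOrder I]
    (hzero : ∀ x y : Z, lam x y 0 = x) (hone : ∀ x y : Z, lam x y 1 = y) {N k : ℕ} {a : I → ℝ}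
    (x : I → Z) {e : Fin (N + 1) → I} (he : StrictMono e)
    (ha : a ∘ e ∈ stdSimplex ℝ (Fin (N + 1))) (hsupp : support a ⊆ range e)
    {e' : Fin (k + 1) → I} (he' : StrictMono e') (hrange : range e' = support a) :
    lambdaIter lam N (x ∘ e) (a ∘ e) = lambdaIter lam k (x ∘ e') (a ∘ e') := by
  choose u hu using fun m => hsupp (hrange ▸ mem_range_self m : e' m ∈ support a)
  have he'_eq : e' = e ∘ u := funext fun m => (hu m).symm
  have humono : StrictMono u := fun m m' h => he.lt_iff_lt.1 (by rw [hu m, hu m']; exact he' h)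
  have hurange : range u = support (a ∘ e) := by
    rw [support_comp_eq_preimage, ← hrange, he'_eq, range_comp, he.injective.preimage_image]
  rw [lambdaIter_comp_of_range_eq_support hzero hone ha _ humono hurange, he'_eq]
  rfl

end DeleteZeroWeights

section Continuity

variable {Z : Type*} [TopologicalSpace Z] {lam : Z → Z → ℝ → Z} {n : ℕ}

lemma continuousAt_mixRatio {s t : ℝ} (h : 0 < s + t) :
    ContinuousAt (fun q : ℝ × ℝ => mixRatio q.1 q.2) (s, t) := by
  have hsum : Continuous fun q : ℝ × ℝ => q.1 + q.2 := continuous_fst.add continuous_snd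
  refine (continuousAt_snd.div hsum.continuousAt h.ne').congr ?_
  filter_upwards [continuousAt_const.eventually_lt hsum.continuousAt h] with q hq
  rw [mixRatio, if_pos hq]
  rfl

lemma continuousOn_mergeHead
    (hc : ContinuousOn (fun p : Z × Z × ℝ => lam p.1 p.2.1 p.2.2) (univ ×ˢ univ ×ˢ Icc 0 1)) :
    ContinuousOn (fun q : (Fin (n + 2) → Z) × ℝ => mergeHead lam q.1 q.2) (univ ×ˢ Icc 0 1) := by
  refine ContinuousOn.finCons ?_ (by fun_prop)
  have : Continuous fun q : (Fin (n + 2) → Z) × ℝ => (q.1 0, q.1 1, q.2) := by fun_prop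
  exact hc.comp this.continuousOn fun q hq => ⟨trivial, trivial, hq.2⟩

lemma continuous_mergeHeadWeight : Continuous (mergeHeadWeight (n := n)) :=
  Continuous.finCons (by fun_prop) (by fun_prop)

theorem continuousOn_lambdaIter
    (hc : ContinuousOn (fun p : Z × Z × ℝ => lam p.1 p.2.1 p.2.2) (univ ×ˢ univ ×ˢ Icc 0 1))
    (hone : ∀ x y : Z, lam x y 1 = y) (n : ℕ) :
    ContinuousOn (fun p : (Fin (n + 1) → Z) × (Fin (n + 1) → ℝ) => lambdaIter lam n p.1 p.2)
      (univ ×ˢ stdSimplex ℝ (Fin (n + 1))) := by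
  induction n with
  | zero => exact ((continuous_apply 0).comp continuous_fst).continuousOn
  | succ n ih =>
    set D := (univ : Set (Fin (n + 2) → Z)) ×ˢ stdSimplex ℝ (Fin (n + 2))
    let T : ((Fin (n + 2) → Z) × (Fin (n + 2) → ℝ)) × ℝ → Z :=
      fun q => lambdaIter lam n (mergeHead lam q.1.1 q.2) (mergeHeadWeight q.1.2)
    let τ : (Fin (n + 2) → Z) × (Fin (n + 2) → ℝ) → ℝ := fun q => mixRatio (q.2 0) (q.2 1)
    have hT : ContinuousOn T (D ×ˢ Icc 0 1) := by
      have hfst : Continuous fun q : ((Fin (n + 2) → Z) × (Fin (n + 2) → ℝ)) × ℝ =>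
          (q.1.1, q.2) := by fun_prop
      have hsnd : Continuous fun q : ((Fin (n + 2) → Z) × (Fin (n + 2) → ℝ)) × ℝ => q.1.2 := by
        fun_prop
      refine ih.comp (((continuousOn_mergeHead hc).comp hfst.continuousOn ?_).prodMk
        (continuous_mergeHeadWeight.comp hsnd).continuousOn) ?_
      · exact fun q hq => ⟨trivial, hq.2⟩
      · exact fun q hq => ⟨trivial, mergeHeadWeight_mem_stdSimplex hq.1.2⟩
    have hτ : MapsTo τ D (Icc 0 1) := fun q hq => mixRatio_mem_Icc (hq.2.1 0) (hq.2.1 1)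
    refine ContinuousOn.congr (f := fun q => T (q, τ q)) (fun p hp => ?_)
      fun q hq => lambdaIter_succ hone _ (hq.2.1 0) (hq.2.1 1)
    rcases (add_nonneg (hp.2.1 0) (hp.2.1 1)).lt_or_eq with hpos | hzero
    · refine (hT _ ⟨hp, hτ hp⟩).comp (continuousWithinAt_id.prodMk ?_) fun q hq => ⟨hq, hτ hq⟩
      have : Continuous fun q : (Fin (n + 2) → Z) × (Fin (n + 2) → ℝ) => (q.2 0, q.2 1) := by
        fun_prop
      exact ((continuousAt_mixRatio hpos).comp
        (f := fun q : (Fin (n + 2) → Z) × (Fin (n + 2) → ℝ) => (q.2 0, q.2 1))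
        this.continuousAt).continuousWithinAt
    -- `α₁ = α₂ = 0`: the merged point gets weight `0`, so `T (p, ·)` is constant on `[0,1]`.
    · obtain ⟨m, rfl⟩ : ∃ m, n = m + 1 := by
        cases n with
        | zero => have := hp.2.2; simp [Fin.sum_univ_two, ← hzero] at this
        | succ m => exact ⟨m, rfl⟩
      have h0 : mergeHeadWeight p.2 0 = 0 := hzero.symm
      refine hT.continuousWithinAt_comp_of_const_slice isCompact_Icc hτ hp
        (c := lambdaIter lam m (fun i => p.1 i.succ.succ) fun i => p.2 i.succ.succ) fun t _ => ?_
      exact lambdaIter_succ_of_apply_zero hone _ h0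

theorem continuous_lambdaIter_left
    (hc : ContinuousOn (fun p : Z × Z × ℝ => lam p.1 p.2.1 p.2.2) (univ ×ˢ univ ×ˢ Icc 0 1))
    (hone : ∀ x y : Z, lam x y 1 = y) {a : Fin (n + 1) → ℝ}
    (ha : a ∈ stdSimplex ℝ (Fin (n + 1))) : Continuous fun x => lambdaIter lam n x a :=
  (continuousOn_lambdaIter hc hone n).comp_continuous (continuous_id.prodMk continuous_const)
    fun _ => ⟨trivial, ha⟩

end Continuity

theorem Set.Finite.exists_strictMono_fin_range_eq {I : Type*} [LinearOrder I] {s : Set I}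
    (hs : s.Finite) (hne : s.Nonempty) :
    ∃ (N : ℕ) (e : Fin (N + 1) → I), StrictMono e ∧ range e = s := by
  have hcard : hs.toFinset.card = hs.toFinset.card - 1 + 1 :=
    (Nat.sub_add_cancel (hs.toFinset_nonempty.2 hne).card_pos).symm
  exact ⟨_, hs.toFinset.orderEmbOfFin hcard, (hs.toFinset.orderEmbOfFin hcard).strictMono,
    by rw [Finset.range_orderEmbOfFin, hs.coe_toFinset]⟩

theorem comp_mem_stdSimplex_of_finsum_eq_one {I ι : Type*} [Fintype ι] {a : I → ℝ}
    (ha0 : ∀ i, 0 ≤ a i) (ha1 : ∑ᶠ i, a i = 1) {e : ι → I} (he : Injective e)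
    (hsupp : support a ⊆ range e) : a ∘ e ∈ stdSimplex ℝ ι := by
  refine ⟨fun m => ha0 _, ?_⟩
  rw [← ha1, ← finsum_eq_sum_of_fintype]
  simp only [comp_apply]
  rw [← finsum_mem_range he]
  exact (finsum_mem_inter_support_eq' _ _ univ fun i hi => iff_of_true (hsupp hi) trivial).trans
    (finsum_mem_univ a)

namespace IsLocFinPartitionOfUnity

variable {I X : Type*} [TopologicalSpace X] {φ : I → X → ℝ}

theorem support_finite (hφ : IsLocFinPartitionOfUnity φ) (x : X) :
    (support fun i => φ i x).Finite :=
  (hφ.2.2.1.point_finite x).subset fun _ hi => subset_closure hi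

theorem support_nonempty (hφ : IsLocFinPartitionOfUnity φ) (x : X) :
    (support fun i => φ i x).Nonempty := by
  refine support_nonempty_iff.2 fun h0 => ?_
  have := hφ.2.2.2 x
  rw [h0] at this
  exact zero_ne_one (finsum_zero.symm.trans this)

theorem comp_mem_stdSimplex (hφ : IsLocFinPartitionOfUnity φ) (x : X) {ι : Type*} [Fintype ι]
    {e : ι → I} (he : Injective e) (hsupp : (support fun i => φ i x) ⊆ range e) :
    (fun m => φ (e m) x) ∈ stdSimplex ℝ ι :=
  comp_mem_stdSimplex_of_finsum_eq_one (fun i => (hφ.2.1 i x).1) (hφ.2.2.2 x) he hsupp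

end IsLocFinPartitionOfUnity

theorem continuous_lambdaIter_partitionOfUnity {X Y Z I : Type*} [TopologicalSpace X]
    [TopologicalSpace Y] [TopologicalSpace Z] [LinearOrder I] {lam : Z → Z → ℝ → Z}
    (hc : ContinuousOn (fun p : Z × Z × ℝ => lam p.1 p.2.1 p.2.2) (univ ×ˢ univ ×ˢ Icc 0 1))
    (hzero : ∀ x y : Z, lam x y 0 = x) (hone : ∀ x y : Z, lam x y 1 = y) {φ : I → X → ℝ}
    (hφ : IsLocFinPartitionOfUnity φ) {w : I → Y → Z} (hw : ∀ i, Continuous (w i))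
    {k : X → ℕ} {e : ∀ x, Fin (k x + 1) → I} (he : ∀ x, StrictMono (e x))
    (hrange : ∀ x, range (e x) = support fun i => φ i x) :
    Continuous fun p : X × Y =>
      lambdaIter lam (k p.1) (fun m => w (e p.1 m) p.2) fun m => φ (e p.1 m) p.1 := by
  refine continuous_iff_continuousAt.2 fun p₀ => ?_
  obtain ⟨U, hU, hUfin⟩ := hφ.2.2.1 p₀.1
  have hsupp : ∀ x ∈ U,
      (support fun i => φ i x) ⊆ {i | (closure (support (φ i)) ∩ U).Nonempty} :=
    fun x hx i hi => ⟨x, subset_closure hi, hx⟩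
  obtain ⟨N, e₀, he₀, hrange₀⟩ := hUfin.exists_strictMono_fin_range_eq
    ((hφ.support_nonempty p₀.1).mono (hsupp p₀.1 (mem_of_mem_nhds hU)))
  have hsimplex : ∀ x ∈ U, (fun m => φ (e₀ m) x) ∈ stdSimplex ℝ (Fin (N + 1)) := fun x hx =>
    hφ.comp_mem_stdSimplex x he₀.injective (hrange₀ ▸ hsupp x hx)
  have hinner : Continuous fun p : X × Y =>
      ((fun m => w (e₀ m) p.2 : Fin (N + 1) → Z), (fun m => φ (e₀ m) p.1 : Fin (N + 1) → ℝ)) :=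
    (continuous_pi fun m => (hw _).comp continuous_snd).prodMk
      (continuous_pi fun m => (hφ.1 _).comp continuous_fst)
  have hlocal : ContinuousOn (fun p : X × Y =>
      lambdaIter lam N (fun m => w (e₀ m) p.2) fun m => φ (e₀ m) p.1) (U ×ˢ univ) :=
    (continuousOn_lambdaIter hc hone N).comp hinner.continuousOn
      fun p hp => ⟨trivial, hsimplex p.1 hp.1⟩
  refine (hlocal.congr fun p hp => ?_).continuousAt (prod_mem_nhds hU univ_mem)
  exact (lambdaIter_comp_eq_of_support_subset hzero hone (a := fun i => φ i p.1)
    (fun i => w i p.2) he₀ (hsimplex p.1 hp.1) (hrange₀ ▸ hsupp p.1 hp.1) (he p.1)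
    (hrange p.1)).symm

theorem baireOne_lambdaSum_of_partitionOfUnity_general {X Y Z I : Type*} [TopologicalSpace X]
    [TopologicalSpace Y] [TopologicalSpace Z] [LinearOrder I]
    (lam : Z → Z → ℝ → Z) (hlam : IsEquiconnecting lam)
    (g : I → Y → Z) (hg : ∀ i, BaireOne (g i))
    (φ : I → X → ℝ) (hφ : IsLocFinPartitionOfUnity φ)
    (f : X × Y → Z)
    (hf : ∀ (x : X) (y : Y) (k : ℕ) (j : Fin (k + 1) → I), StrictMono j →
      (∀ m, φ (j m) x ≠ 0) → (∀ i, φ i x ≠ 0 → ∃ m, j m = i) →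
      f (x, y) = lambdaIter lam k (fun m => g (j m) y) fun m => φ (j m) x) :
    BaireOne f := by
  choose h hcont hlim using hg
  choose k e he hrange using fun x =>
    (hφ.support_finite x).exists_strictMono_fin_range_eq (hφ.support_nonempty x)
  refine ⟨fun n p => lambdaIter lam (k p.1) (fun m => h (e p.1 m) n p.2) fun m => φ (e p.1 m) p.1,
    fun n => continuous_lambdaIter_partitionOfUnity hlam.continuousOn hlam.map_zero hlam.map_one
      hφ (fun i => hcont i n) he hrange, fun ⟨x, y⟩ => ?_⟩
  rw [hf x y (k x) (e x) (he x) (fun m => (hrange x).subset (mem_range_self m))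
    fun i hi => (hrange x).superset hi]
  have hweights := hφ.comp_mem_stdSimplex x (he x).injective (hrange x).superset
  exact ((continuous_lambdaIter_left hlam.continuousOn hlam.map_one hweights).tendsto _).comp
    (tendsto_pi_nhds.2 fun m => hlim _ y)

/-- If `(Z, λ)` is an equiconnected space, `(I, ≤)` a well-ordered set,
`(f_i)` a family of Baire-one maps `Y → Z` and `(φ_i)` a locally finite partition of unity
on `X`, then `f(x,y) = Σ^λ_{i∈I} φ_i(x) f_i(y)` is Baire-one.  The λ-sum is encoded by the
hypothesis `hf`: whenever `j : Fin (k+1) → I` is the increasing enumeration of the (finite,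
nonempty) support `{i | φ_i(x) ≠ 0}`, then
`f(x,y) = λ_{k+1}(f_{j 0}(y),…,f_{j k}(y), φ_{j 0}(x),…,φ_{j k}(x))`. -/
theorem baireOne_lambdaSum_of_partitionOfUnity {X Y Z I : Type*} [TopologicalSpace X]
    [TopologicalSpace Y] [TopologicalSpace Z] [LinearOrder I] [WellFoundedLT I]
    (lam : Z → Z → ℝ → Z) (hlam : IsEquiconnecting lam)
    (g : I → Y → Z) (hg : ∀ i, BaireOne (g i))
    (φ : I → X → ℝ) (hφ : IsLocFinPartitionOfUnity φ)
    (f : X × Y → Z)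
    (hf : ∀ (x : X) (y : Y) (k : ℕ) (j : Fin (k + 1) → I), StrictMono j →
      (∀ m, φ (j m) x ≠ 0) → (∀ i, φ i x ≠ 0 → ∃ m, j m = i) →
      f (x, y) = lambdaIter lam k (fun m => g (j m) y) fun m => φ (j m) x) :
    BaireOne f :=
  baireOne_lambdaSum_of_partitionOfUnity_general lam hlam g hg φ hφ f hf
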